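/- Let r, s ≥ 0 be integers with n = 2(r+s) ≥ 1, and let v ∈ (ℤ/4ℤ)^n have type (t₀, t₁, t₂, t₃). Then 4 · C(n; t₀,t₁,t₂,t₃) · |S(v,0)| = C(n; r,s,r,s) · c, where c is the coefficient of x^{t₀} y^{t₁} z^{t₂} w^{t₃} in the integer polynomial (x+y+z+w)^n + 2·((x+z)² − (y+w)²)^r·((x−z)² + (y−w)²)^s + (x+y+z+w)^{2r}(x−y+z−w)^{2s}. -/

import Mathlib

/-- The number of coordinates of `v ∈ (ℤ/4ℤ)^n` equal to `k`. -/
def typeCount {n : ℕ} (v : Fin n → ZMod 4) (k : ZMod 4) : ℕ :=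
  (Finset.univ.filter fun i => v i = k).card

/-- `v ∈ (ℤ/4ℤ)^n` has type `(t₀, t₁, t₂, t₃)`. -/
def HasType {n : ℕ} (v : Fin n → ZMod 4) (t0 t1 t2 t3 : ℕ) : Prop :=
  typeCount v 0 = t0 ∧ typeCount v 1 = t1 ∧ typeCount v 2 = t2 ∧ typeCount v 3 = t3

instance {n : ℕ} (v : Fin n → ZMod 4) (t0 t1 t2 t3 : ℕ) :
    Decidable (HasType v t0 t1 t2 t3) := by
  unfold HasType; infer_instance

/-- `|S(v, a)|`: the number of vectors `b` of type `(r, s, r, s)` with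
`v · b = a` in `ℤ/4ℤ`. -/
def Scard {n : ℕ} (r s : ℕ) (v : Fin n → ZMod 4) (a : ZMod 4) : ℕ :=
  (Finset.univ.filter fun b : Fin n → ZMod 4 =>
    HasType b r s r s ∧ (∑ i, v i * b i) = a).card

/-- The eigenvalue `λ(v) = |S(v,0)| - |S(v,2)|` of `Cay((ℤ/4ℤ)^n, S)`. -/
def lambdaEV {n : ℕ} (r s : ℕ) (v : Fin n → ZMod 4) : ℤ :=
  (Scard r s v 0 : ℤ) - (Scard r s v 2 : ℤ)

/-- The multinomial coefficient `C(n; r, s, r, s)` (with `n = 2(r+s)`). -/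
def multinomRSRS (r s : ℕ) : ℕ :=
  Nat.multinomial Finset.univ ![r, s, r, s]

/-! Write `ψ(a) = i^a` for the additive character of `ℤ/4ℤ`. By orthogonality,
`4·|S(v,0)| = ∑_j ∑_{b ∈ S} ψ(j v·b)`, and for fixed `j` the inner sum is the coefficient of
`x^{(r,s,r,s)}` in `∏_k L_k^{t_k}` with `L_k = ∑_c ψ(jkc) X_c`. Multiplying by `C(n; t)` turns this
into a sum over all pairs `(u, b)` of vectors of types `t` and `(r,s,r,s)` of `∏_i ψ(j u_i b_i)`;
reading the same double sum the other way round gives `C(n; r,s,r,s)` times the coefficient of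
`x^t` in `∏_c (∑_k ψ(jck) X_k)^{(r,s,r,s)_c}`. For `j = 0, 1, 2, 3` these products are
`(x+y+z+w)^n`, two complex conjugates `(x+y+z+w)^r (x+iy-z-iw)^s (x-y+z-w)^r (x-iy-z+iw)^s`
adding up to `2((x+z)²-(y+w)²)^r((x-z)²+(y-w)²)^s`, and `(x+y+z+w)^{2r}(x-y+z-w)^{2s}`. -/

open Finset MvPolynomial

section FiberCard

variable {ι κ : Type*} [Fintype ι]

noncomputable def fiberCard (b : ι → κ) : κ →₀ ℕ := ∑ i, Finsupp.single (b i) 1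

theorem fiberCard_apply [DecidableEq κ] (b : ι → κ) (k : κ) :
    fiberCard b k = #{i | b i = k} := by
  simp [fiberCard, Finsupp.finsetSum_apply, Finsupp.single_apply]

theorem degree_fiberCard (b : ι → κ) : (fiberCard b).degree = Fintype.card ι := by
  simp [fiberCard]

theorem prod_comp_eq_prod_pow_fiberCard [Fintype κ] [DecidableEq κ] {M : Type*} [CommMonoid M]
    (b : ι → κ) (g : κ → M) : ∏ i, g (b i) = ∏ k, g k ^ fiberCard b k := by
  simp_rw [← prod_fiberwise' univ b g, prod_const, fiberCard_apply]

theorem prod_X_comp_eq_monomial {R : Type*} [CommSemiring R] (b : ι → κ) :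
    ∏ i, (X (b i) : MvPolynomial κ R) = monomial (fiberCard b) 1 := by
  simp_rw [fiberCard, monomial_sum_one, X]

end FiberCard

section Duality

variable {ι κ K R : Type*} [Fintype ι] [DecidableEq ι] [Fintype κ] [DecidableEq κ]
  [Fintype K] [DecidableEq K] [CommSemiring R]

theorem coeff_prod_sum_C_mul_X (w : ι → κ → R) (A : κ →₀ ℕ) :
    coeff A (∏ i, ∑ c, C (w i c) * X c) = ∑ b : ι → κ with fiberCard b = A, ∏ i, w i (b i) := by
  simp_rw [Fintype.prod_sum, prod_mul_distrib, ← map_prod, prod_X_comp_eq_monomial, coeff_sum,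
    coeff_C_mul, coeff_monomial, mul_ite, mul_one, mul_zero, sum_filter]

theorem card_fiberCard_eq_multinomial {A : κ →₀ ℕ} (hA : A.degree = Fintype.card ι) :
    #{b : ι → κ | fiberCard b = A} = A.multinomial := by
  have h := coeff_prod_sum_C_mul_X (R := ℕ) (fun (_ : ι) (_ : κ) => 1) A
  simp only [map_one, one_mul, prod_const, card_univ, one_pow, coeff_sum_X_pow_of_fintype,
    Nat.cast_id, ← card_eq_sum_ones] at h
  rw [← h, if_pos]
  rw [← hA, Finsupp.degree_eq_sum, Finsupp.sum_fintype _ _ fun _ => rfl]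

theorem multinomial_mul_coeff_prod_pow_eq_sum (M : K → κ → R) (t : K →₀ ℕ) (A : κ →₀ ℕ)
    (ht : t.degree = Fintype.card ι) :
    t.multinomial * coeff A (∏ k, (∑ c, C (M k c) * X c) ^ t k) =
      ∑ u : ι → K with fiberCard u = t, ∑ b : ι → κ with fiberCard b = A,
        ∏ i, M (u i) (b i) := by
  rw [← card_fiberCard_eq_multinomial ht, ← nsmul_eq_mul, ← sum_const]
  refine sum_congr rfl fun u hu => ?_
  rw [← coeff_prod_sum_C_mul_X, ← (mem_filter.1 hu).2,
    prod_comp_eq_prod_pow_fiberCard u fun k => (∑ c, C (M k c) * X c : MvPolynomial κ R)]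

theorem multinomial_mul_coeff_prod_pow_comm (M : K → κ → R) {t : K →₀ ℕ} {A : κ →₀ ℕ}
    (h : t.degree = A.degree) :
    (t.multinomial : R) * coeff A (∏ k, (∑ c, C (M k c) * X c) ^ t k) =
      A.multinomial * coeff t (∏ c, (∑ k, C (M k c) * X k) ^ A c) := by
  rw [multinomial_mul_coeff_prod_pow_eq_sum (ι := Fin t.degree) M t A (Fintype.card_fin _).symm,
    multinomial_mul_coeff_prod_pow_eq_sum (ι := Fin t.degree) (fun (c : κ) (k : K) => M k c) A t
      (by rw [Fintype.card_fin, h])]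
  exact sum_comm

end Duality

namespace AddChar

theorem map_sum_eq_prod {A M β : Type*} [AddCommMonoid A] [CommMonoid M] (ψ : AddChar A M)
    (s : Finset β) (f : β → A) : ψ (∑ x ∈ s, f x) = ∏ x ∈ s, ψ (f x) := by
  induction s using Finset.cons_induction with
  | empty => simp
  | cons x s hx ih => rw [sum_cons, prod_cons, map_add_eq_mul, ih]

variable {Z R : Type*} [CommRing Z] [Fintype Z] [DecidableEq Z] [CommRing R] [IsDomain R]
  {ψ : AddChar Z R}

theorem IsPrimitive.card_mul_card_filter_eq_sum_sum (hψ : ψ.IsPrimitive) {β : Type*}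
    (s : Finset β) (f : β → Z) :
    (Fintype.card Z * #{x ∈ s | f x = 0} : R) = ∑ j, ∑ x ∈ s, ψ (j * f x) := by
  simp_rw [sum_comm (γ := Z), sum_mulShift _ hψ, Nat.cast_ite, Nat.cast_zero]
  rw [← sum_filter, sum_const, nsmul_eq_mul, mul_comm]

theorem IsPrimitive.card_mul_card_filter_dotProduct_eq_zero (hψ : ψ.IsPrimitive) {ι : Type*}
    [Fintype ι] [DecidableEq ι] (v : ι → Z) (A : Z →₀ ℕ) :
    (Fintype.card Z * #{b : ι → Z | fiberCard b = A ∧ v ⬝ᵥ b = 0} : R) =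
      ∑ j, coeff A (∏ k, (∑ c, C (ψ (j * c * k)) * X c) ^ fiberCard v k) := by
  rw [← filter_filter, hψ.card_mul_card_filter_eq_sum_sum]
  refine sum_congr rfl fun j _ => ?_
  rw [← prod_comp_eq_prod_pow_fiberCard v
    fun k => (∑ c, C (ψ (j * c * k)) * X c : MvPolynomial Z R), coeff_prod_sum_C_mul_X]
  refine sum_congr rfl fun b _ => ?_
  rw [dotProduct, mul_sum, map_sum_eq_prod]
  exact prod_congr rfl fun i _ => by ring_nf

theorem IsPrimitive.card_mul_multinomial_mul_card_filter_dotProduct_eq_zero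
    (hψ : ψ.IsPrimitive) {ι : Type*} [Fintype ι] [DecidableEq ι] (v : ι → Z) {A : Z →₀ ℕ}
    (hA : A.degree = Fintype.card ι) :
    (Fintype.card Z * (fiberCard v).multinomial *
        #{b : ι → Z | fiberCard b = A ∧ v ⬝ᵥ b = 0} : R) =
      A.multinomial * coeff (fiberCard v) (∑ j, ∏ c, (∑ k, C (ψ (j * c * k)) * X k) ^ A c) := by
  calc _ = ((fiberCard v).multinomial : R) *
          (Fintype.card Z * #{b : ι → Z | fiberCard b = A ∧ v ⬝ᵥ b = 0}) := by ring
    _ = ∑ j, (A.multinomial : R) *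
          coeff (fiberCard v) (∏ c, (∑ k, C (ψ (j * c * k)) * X k) ^ A c) := by
      rw [hψ.card_mul_card_filter_dotProduct_eq_zero, mul_sum]
      exact sum_congr rfl fun j _ =>
        multinomial_mul_coeff_prod_pow_comm _ (by rw [degree_fiberCard, hA])
    _ = _ := by rw [← mul_sum, coeff_sum]

end AddChar

namespace ZMod

theorem forall_four {p : ZMod 4 → Prop} : (∀ k, p k) ↔ p 0 ∧ p 1 ∧ p 2 ∧ p 3 :=
  ⟨fun h => ⟨h 0, h 1, h 2, h 3⟩, fun ⟨h0, h1, h2, h3⟩ k => by fin_cases k <;> assumption⟩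

theorem sum_univ_four {M : Type*} [AddCommMonoid M] (f : ZMod 4 → M) :
    ∑ j, f j = f 0 + f 1 + f 2 + f 3 :=
  Fin.sum_univ_four f

theorem prod_univ_four {M : Type*} [CommMonoid M] (f : ZMod 4 → M) :
    ∏ j, f j = f 0 * f 1 * f 2 * f 3 :=
  Fin.prod_univ_four f

end ZMod

noncomputable def typeFinsupp (t0 t1 t2 t3 : ℕ) : ZMod 4 →₀ ℕ :=
  Finsupp.single 0 t0 + Finsupp.single 1 t1 + Finsupp.single 2 t2 + Finsupp.single 3 t3

section TypeFinsupp

variable (t0 t1 t2 t3 : ℕ)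

@[simp] theorem typeFinsupp_apply_zero : typeFinsupp t0 t1 t2 t3 0 = t0 := by
  simp +decide [typeFinsupp]

@[simp] theorem typeFinsupp_apply_one : typeFinsupp t0 t1 t2 t3 1 = t1 := by
  simp +decide [typeFinsupp]

@[simp] theorem typeFinsupp_apply_two : typeFinsupp t0 t1 t2 t3 2 = t2 := by
  simp +decide [typeFinsupp]

@[simp] theorem typeFinsupp_apply_three : typeFinsupp t0 t1 t2 t3 3 = t3 := by
  simp +decide [typeFinsupp]

theorem degree_typeFinsupp : (typeFinsupp t0 t1 t2 t3).degree = t0 + t1 + t2 + t3 := by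
  simp [typeFinsupp]

theorem multinomial_typeFinsupp :
    (typeFinsupp t0 t1 t2 t3).multinomial = Nat.multinomial univ ![t0, t1, t2, t3] := by
  simp only [← Finsupp.multinomial_of_support_subset (subset_univ _), Nat.multinomial,
    ZMod.sum_univ_four, ZMod.prod_univ_four, Fin.sum_univ_four, Fin.prod_univ_four,
    typeFinsupp_apply_zero, typeFinsupp_apply_one, typeFinsupp_apply_two,
    typeFinsupp_apply_three, Matrix.cons_val_zero, Matrix.cons_val_one, Matrix.cons_val_two,
    Matrix.cons_val_three, Matrix.head_cons, Matrix.tail_cons]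

theorem hasType_iff_fiberCard_eq {n : ℕ} (b : Fin n → ZMod 4) :
    HasType b t0 t1 t2 t3 ↔ fiberCard b = typeFinsupp t0 t1 t2 t3 := by
  simp only [HasType, typeCount, ← fiberCard_apply, Finsupp.ext_iff, ZMod.forall_four,
    typeFinsupp_apply_zero, typeFinsupp_apply_one, typeFinsupp_apply_two,
    typeFinsupp_apply_three]

end TypeFinsupp

theorem Scard_zero_eq_card_filter (r s : ℕ) {n : ℕ} (v : Fin n → ZMod 4) :
    Scard r s v 0 = #{b | fiberCard b = typeFinsupp r s r s ∧ v ⬝ᵥ b = 0} := by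
  simp only [Scard, hasType_iff_fiberCard_eq]
  rfl

open Complex

noncomputable def iPowChar : AddChar (ZMod 4) ℂ :=
  AddChar.zmodChar 4 isPrimitiveRoot_I.pow_eq_one

theorem isPrimitive_iPowChar : iPowChar.IsPrimitive :=
  AddChar.zmodChar_primitive_of_primitive_root 4 isPrimitiveRoot_I

theorem iPowChar_one : iPowChar 1 = I := by
  rw [iPowChar, AddChar.zmodChar_apply, show (1 : ZMod 4).val = 1 from rfl, pow_one]

theorem iPowChar_two : iPowChar 2 = -1 := by
  rw [iPowChar, AddChar.zmodChar_apply, show (2 : ZMod 4).val = 2 from rfl, I_sq]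

theorem iPowChar_three : iPowChar 3 = -I := by
  rw [iPowChar, AddChar.zmodChar_apply, show (3 : ZMod 4).val = 3 from rfl, I_pow_three]

noncomputable def charForm (m : ZMod 4) : MvPolynomial (ZMod 4) ℂ :=
  ∑ k, C (iPowChar (m * k)) * X k

theorem charForm_zero : charForm 0 = X 0 + X 1 + X 2 + X 3 := by
  simp [charForm, ZMod.sum_univ_four]

theorem charForm_one : charForm 1 = X 0 + C I * X 1 - X 2 - C I * X 3 := by
  simp [charForm, ZMod.sum_univ_four, iPowChar_one, iPowChar_two, iPowChar_three]
  ring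

theorem charForm_two : charForm 2 = X 0 - X 1 + X 2 - X 3 := by
  simp [charForm, ZMod.sum_univ_four, iPowChar_two, show (2 * 2 : ZMod 4) = 0 by decide,
    show (2 * 3 : ZMod 4) = 2 by decide]
  ring

theorem charForm_three : charForm 3 = X 0 - C I * X 1 - X 2 + C I * X 3 := by
  simp [charForm, ZMod.sum_univ_four, iPowChar_one, iPowChar_two, iPowChar_three,
    show (3 * 2 : ZMod 4) = 2 by decide, show (3 * 3 : ZMod 4) = 1 by decide]
  ring

theorem charForm_zero_mul_charForm_two :
    charForm 0 * charForm 2 = (X 0 + X 2) ^ 2 - (X 1 + X 3) ^ 2 := by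
  rw [charForm_zero, charForm_two]
  ring

theorem charForm_one_mul_charForm_three :
    charForm 1 * charForm 3 = (X 0 - X 2) ^ 2 + (X 1 - X 3) ^ 2 := by
  have hI : (C I : MvPolynomial (ZMod 4) ℂ) ^ 2 = -1 := by
    rw [← map_pow, I_sq, map_neg, map_one]
  rw [charForm_one, charForm_three]
  linear_combination (-(X 1 - X 3 : MvPolynomial (ZMod 4) ℂ) ^ 2) * hI

theorem sum_prod_charForm_pow (r s : ℕ) :
    ∑ j, ∏ c, charForm (j * c) ^ typeFinsupp r s r s c =
      MvPolynomial.map (Int.castRingHom ℂ)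
        ((X 0 + X 1 + X 2 + X 3) ^ (2 * (r + s)) +
          2 * ((X 0 + X 2) ^ 2 - (X 1 + X 3) ^ 2) ^ r * ((X 0 - X 2) ^ 2 + (X 1 - X 3) ^ 2) ^ s +
          (X 0 + X 1 + X 2 + X 3) ^ (2 * r) * (X 0 - X 1 + X 2 - X 3) ^ (2 * s) :
        MvPolynomial (ZMod 4) ℤ) := by
  simp only [ZMod.sum_univ_four, ZMod.prod_univ_four, typeFinsupp_apply_zero,
    typeFinsupp_apply_one, typeFinsupp_apply_two, typeFinsupp_apply_three, mul_zero, zero_mul,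
    mul_one, one_mul, show (2 * 2 : ZMod 4) = 0 by decide, show (2 * 3 : ZMod 4) = 2 by decide,
    show (3 * 2 : ZMod 4) = 2 by decide, show (3 * 3 : ZMod 4) = 1 by decide,
    map_add, map_mul, map_sub, map_pow, map_ofNat, map_X]
  rw [← charForm_zero_mul_charForm_two, ← charForm_one_mul_charForm_three, ← charForm_zero,
    ← charForm_two]
  ring

open MvPolynomial in
theorem S0_formula_general (r s n : ℕ) (hn : n = 2 * (r + s))
    (v : Fin n → ZMod 4) (t0 t1 t2 t3 : ℕ) (hv : HasType v t0 t1 t2 t3) :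
    (4 * Nat.multinomial Finset.univ ![t0, t1, t2, t3] * Scard r s v 0 : ℤ) =
      (multinomRSRS r s : ℤ) *
        MvPolynomial.coeff
          (Finsupp.single 0 t0 + Finsupp.single 1 t1 +
            Finsupp.single 2 t2 + Finsupp.single 3 t3)
          ((X 0 + X 1 + X 2 + X 3) ^ n +
            2 * ((X 0 + X 2) ^ 2 - (X 1 + X 3) ^ 2) ^ r *
              ((X 0 - X 2) ^ 2 + (X 1 - X 3) ^ 2) ^ s +
            (X 0 + X 1 + X 2 + X 3) ^ (2 * r) *
              (X 0 - X 1 + X 2 - X 3) ^ (2 * s) :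
            MvPolynomial (Fin 4) ℤ) := by
  subst hn
  have key := isPrimitive_iPowChar.card_mul_multinomial_mul_card_filter_dotProduct_eq_zero v
    (A := typeFinsupp r s r s) (by rw [degree_typeFinsupp, Fintype.card_fin]; ring)
  have hsum := sum_prod_charForm_pow r s
  simp only [charForm] at hsum
  rw [(hasType_iff_fiberCard_eq _ _ _ _ v).1 hv, hsum, coeff_map, eq_intCast, ZMod.card,
    ← Scard_zero_eq_card_filter, multinomial_typeFinsupp, multinomial_typeFinsupp] at key
  rw [multinomRSRS]
  -- `key` is stated over `ZMod 4`, which is `Fin 4` by definition, ring structure included.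
  exact_mod_cast key

open MvPolynomial in
/-- `4·C(n; t₀,t₁,t₂,t₃)·|S(v,0)|` equals `C(n; r,s,r,s)` times
the coefficient of `x^{t₀} y^{t₁} z^{t₂} w^{t₃}` in
`(x+y+z+w)^n + 2((x+z)²-(y+w)²)^r((x-z)²+(y-w)²)^s + (x+y+z+w)^{2r}(x-y+z-w)^{2s}`. -/
theorem S0_formula (r s n : ℕ) (hn : n = 2 * (r + s)) (hn1 : 1 ≤ n)
    (v : Fin n → ZMod 4) (t0 t1 t2 t3 : ℕ) (hv : HasType v t0 t1 t2 t3) :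
    (4 * Nat.multinomial Finset.univ ![t0, t1, t2, t3] * Scard r s v 0 : ℤ) =
      (multinomRSRS r s : ℤ) *
        MvPolynomial.coeff
          (Finsupp.single 0 t0 + Finsupp.single 1 t1 +
            Finsupp.single 2 t2 + Finsupp.single 3 t3)
          ((X 0 + X 1 + X 2 + X 3) ^ n +
            2 * ((X 0 + X 2) ^ 2 - (X 1 + X 3) ^ 2) ^ r *
              ((X 0 - X 2) ^ 2 + (X 1 - X 3) ^ 2) ^ s +
            (X 0 + X 1 + X 2 + X 3) ^ (2 * r) *
              (X 0 - X 1 + X 2 - X 3) ^ (2 * s) :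
            MvPolynomial (Fin 4) ℤ) :=
  S0_formula_general r s n hn v t0 t1 t2 t3 hv
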